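/- For integers m ≥ 0, n ≥ 1 and any parameter μ ∈ ℝ, the generalised Laguerre polynomial has the discrete symmetry T_{m,n}^{(μ)}(z) = (−1)^{⌊(m+n+1)/2⌋} · T_{n−1, m+1}^{(−μ−2n−2m−2)}(−z). -/

import Mathlib

noncomputable section

open Finset

/-- Generalized binomial coefficient `C(x, k)` for real `x`. -/
def genBinom (x : ℝ) (k : ℕ) : ℝ :=
  (∏ i ∈ Finset.range k, (x - i)) / (Nat.factorial k)

/-- Associated Laguerre polynomial `L_n^{(α)}(z)`, with the convention `L_n^{(α)} = 0` for `n < 0`. -/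
def lagL (n : ℤ) (α : ℝ) : ℝ → ℝ := fun z =>
  if n < 0 then 0
  else ∑ k ∈ Finset.range (n.toNat + 1),
    (-1 : ℝ) ^ k * genBinom ((n : ℝ) + α) (n.toNat - k) * z ^ k / (Nat.factorial k)

/-- Generalised Laguerre polynomial
`T_{m,n}^{(μ)}(z) = det[(d/dz)^{j+k} L_{m+n}^{(μ+1)}(z)]_{j,k=0}^{n-1}`
(with `T_{m,0}^{(μ)} = 1`, the empty determinant). -/
def genLag (m : ℤ) (n : ℕ) (μ : ℝ) : ℝ → ℝ := fun z =>
  Matrix.det (Matrix.of fun j k : Fin n =>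
    iteratedDeriv ((j : ℕ) + (k : ℕ)) (lagL (m + n) (μ + 1)) z)

/-- Wronskian `Wr(f_1, …, f_r)(z) = det[(d/dz)^{j-1} f_k(z)]`. -/
def wronskian {r : ℕ} (f : Fin r → ℝ → ℝ) : ℝ → ℝ := fun z =>
  Matrix.det (Matrix.of fun j k : Fin r => iteratedDeriv (j : ℕ) (f k) z)

/-- The constant `c_{m,n} = (-1)^{n(2m+1+n)/2} ∏_{j=1}^n (j-1)!/(m+j)!`. -/
def cmn (m n : ℕ) : ℝ :=
  (-1 : ℝ) ^ (n * (2 * m + 1 + n) / 2) *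
    ∏ j ∈ Finset.range n, (Nat.factorial j : ℝ) / (Nat.factorial (m + j + 1))

/-- `τ_{m,n}^{(μ)}(z) = det[(z d/dz)^{j+k} L_{m+n}^{(n+μ)}(z)]_{j,k=0}^{n-1}`. -/
def tauP (m : ℤ) (n : ℕ) (μ : ℝ) : ℝ → ℝ := fun z =>
  Matrix.det (Matrix.of fun j k : Fin n =>
    ((fun (g : ℝ → ℝ) => fun t => t * deriv g t)^[(j : ℕ) + (k : ℕ)]
      (lagL (m + n) ((n : ℝ) + μ))) z)

/-- Hirota bilinear operator `D_z(f • g) = f' g - f g'`. -/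
def hirota (f g : ℝ → ℝ) (z : ℝ) : ℝ := deriv f z * g z - f z * deriv g z

/-- Probabilists' Hermite polynomial `He_n` as a real function. -/
def He (n : ℕ) : ℝ → ℝ := fun z => Polynomial.aeval z (Polynomial.hermite n)

/-- The fifth Painlevé equation (with `δ = -1/2`) for `w` with parameters `(a, b, c)`,
holding at the point `z`. -/
def PV (a b c : ℝ) (w : ℝ → ℝ) (z : ℝ) : Prop :=
  iteratedDeriv 2 w z =
    (1 / (2 * w z) + 1 / (w z - 1)) * (deriv w z) ^ 2
      - (1 / z) * deriv w z
      + (w z - 1) ^ 2 * (a * (w z) ^ 2 + b) / (z ^ 2 * w z)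
      + c * w z / z
      - w z * (w z + 1) / (2 * (w z - 1))

/-- The Jimbo–Miwa–Okamoto `σ`-equation `S_V` with parameters `(ν₁, ν₂, ν₃)`,
holding at the point `z`. -/
def SV (ν₁ ν₂ ν₃ : ℝ) (σ : ℝ → ℝ) (z : ℝ) : Prop :=
  (z * iteratedDeriv 2 σ z) ^ 2 =
    (2 * (deriv σ z) ^ 2 + (ν₁ + ν₂ + ν₃ - z) * deriv σ z + σ z) ^ 2
      - 4 * deriv σ z * (deriv σ z + ν₁) * (deriv σ z + ν₂) * (deriv σ z + ν₃)

/-!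
With `N = n + m`, let `A` be the `(N+1) × (N+1)` Hankel matrix of the derivatives of
`L_N^{(μ+1)}` at `z` and `B` the one of `L_N^{(-μ-2N-1)}` at `-z`. Writing these as
`L_k^{(β-k)}` with `β = ±(μ + N + 1)`, the entries of `A · (B with rows and columns reversed)` are
the convolutions `∑_{i+j=t} L_i^{(β-i)}(z) L_j^{(-β-j)}(-z) = δ_{t,0}` (the derivative telescopes
to zero and the value at `0` is the Chu–Vandermonde sum `C(0, t)`), so this product is the identity.
Jacobi's complementary-minor identity then gives `det A · T_{n-1,m+1}(-z) = T_{m,n}(z)`, and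
`det A = (-1)^{⌊(N+1)/2⌋}` because `A` vanishes below its antidiagonal, where its entries
are `(-1)^N`.
-/

open scoped Nat

lemma genBinom_eq_choose (x : ℝ) (k : ℕ) : genBinom x k = Ring.choose x k := by
  rw [Ring.choose_eq_smul, ← Polynomial.aeval_eq_smeval, Polynomial.aeval_def,
    ← Polynomial.eval_map, descPochhammer_map, descPochhammer_eval_eq_prod_range,
    smul_eq_mul, genBinom, div_eq_inv_mul]

lemma lagL_of_neg {n : ℤ} (hn : n < 0) (α : ℝ) : lagL n α = 0 := by
  funext z
  simp [lagL, hn]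

lemma lagL_natCast (n : ℕ) (α z : ℝ) :
    lagL n α z = ∑ k ∈ range (n + 1), (-1) ^ k * genBinom (n + α) (n - k) * z ^ k / k ! := by
  simp [lagL]

lemma lagL_zero_left (α z : ℝ) : lagL 0 α z = 1 := by
  simpa [genBinom] using lagL_natCast 0 α z

lemma lagL_natCast_apply_zero (n : ℕ) (α : ℝ) : lagL n α 0 = genBinom (n + α) n := by
  rw [lagL_natCast, sum_range_succ', sum_eq_zero fun k _ => by simp]
  simp

lemma hasDerivAt_pow_succ_div_factorial (k : ℕ) (z : ℝ) :
    HasDerivAt (fun z : ℝ => z ^ (k + 1) / (k + 1)!) (z ^ k / k !) z := by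
  refine ((hasDerivAt_pow (k + 1) z).div_const _).congr_deriv ?_
  rw [Nat.factorial_succ, Nat.add_sub_cancel]
  push_cast
  field_simp

lemma hasDerivAt_lagL_natCast_succ (p : ℕ) (α z : ℝ) :
    HasDerivAt (lagL (p + 1 : ℕ) α) (-lagL p (α + 1) z) z := by
  set c : ℕ → ℝ := fun k => (-1) ^ (k + 1) * genBinom ((p + 1 : ℕ) + α) (p - k)
  have hL : lagL (p + 1 : ℕ) α = fun z =>
      genBinom ((p + 1 : ℕ) + α) (p + 1) + ∑ k ∈ range (p + 1), c k * (z ^ (k + 1) / (k + 1)!) := by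
    funext z
    rw [lagL_natCast, sum_range_succ', add_comm]
    simp [c, mul_div_assoc]
  have hc : ∀ k, c k = -((-1) ^ k * genBinom (p + (α + 1)) (p - k)) := fun k => by
    simp only [c]
    rw [show ((p + 1 : ℕ) : ℝ) + α = p + (α + 1) by push_cast; ring, pow_succ]
    ring
  rw [hL, lagL_natCast, ← sum_neg_distrib]
  refine (HasDerivAt.fun_sum fun k _ =>
      (hasDerivAt_pow_succ_div_factorial k z).const_mul (c k)).const_add _
    |>.congr_deriv (sum_congr rfl fun k _ => ?_)
  rw [hc]
  ring

lemma hasDerivAt_lagL (n : ℤ) (α z : ℝ) :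
    HasDerivAt (lagL n α) (-lagL (n - 1) (α + 1) z) z := by
  obtain hn | rfl | hn := lt_trichotomy n 0
  · rw [lagL_of_neg hn, lagL_of_neg (by omega : n - 1 < 0)]
    simp
  · rw [lagL_of_neg (by norm_num : (0 : ℤ) - 1 < 0), funext (lagL_zero_left α)]
    simpa using hasDerivAt_const z (1 : ℝ)
  · obtain ⟨p, rfl⟩ : ∃ p : ℕ, n = (p + 1 : ℕ) := ⟨n.toNat - 1, by omega⟩
    simpa using hasDerivAt_lagL_natCast_succ p α z

/-- `L_n^{(β-n)}`: the Laguerre polynomials with `n + α = β` fixed, a family that differentiation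
maps into itself, lowering `n` by one. -/
def lagDiag (β : ℝ) (n : ℤ) : ℝ → ℝ := lagL n (β - n)

lemma lagL_eq_lagDiag (n : ℤ) (α : ℝ) : lagL n α = lagDiag (α + n) n := by
  simp [lagDiag]

lemma lagDiag_of_neg (β : ℝ) {n : ℤ} (hn : n < 0) : lagDiag β n = 0 :=
  lagL_of_neg hn _

lemma lagDiag_zero (β z : ℝ) : lagDiag β 0 z = 1 :=
  lagL_zero_left _ z

lemma lagDiag_natCast_apply_zero (β : ℝ) (n : ℕ) : lagDiag β n 0 = Ring.choose β n := by
  simp [lagDiag, lagL_natCast_apply_zero, genBinom_eq_choose]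

lemma hasDerivAt_lagDiag (β : ℝ) (n : ℤ) (z : ℝ) :
    HasDerivAt (lagDiag β n) (-lagDiag β (n - 1) z) z := by
  have h := hasDerivAt_lagL n (β - n) z
  rwa [show β - n + 1 = β - ((n - 1 : ℤ) : ℝ) by push_cast; ring] at h

lemma iteratedDeriv_lagDiag (β : ℝ) (n : ℤ) (s : ℕ) :
    iteratedDeriv s (lagDiag β n) = fun z => (-1) ^ s * lagDiag β (n - s) z := by
  induction s with
  | zero => simp
  | succ s ih =>
    funext z
    rw [iteratedDeriv_succ, ih, ((hasDerivAt_lagDiag β (n - s) z).const_mul _).deriv, sub_sub]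
    push_cast
    ring

lemma hasDerivAt_lagDiag_mul_lagDiag_neg (α β : ℝ) (i j : ℤ) (z : ℝ) :
    HasDerivAt (fun w => lagDiag α i w * lagDiag β j (-w))
      (lagDiag α i z * lagDiag β (j - 1) (-z) - lagDiag α (i - 1) z * lagDiag β j (-z)) z := by
  have hb : HasDerivAt (fun w => lagDiag β j (-w)) (lagDiag β (j - 1) (-z)) z := by
    have hneg : HasDerivAt (fun w : ℝ => -w) (-1) z := (hasDerivAt_id z).neg
    exact ((hasDerivAt_lagDiag β j (-z)).comp z hneg).congr_deriv (by ring)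
  exact ((hasDerivAt_lagDiag α i z).fun_mul hb).congr_deriv (by ring)

lemma sum_antidiagonal_lagDiag_mul_lagDiag_neg (α z : ℝ) (t : ℕ) :
    ∑ x ∈ antidiagonal t, lagDiag α x.1 z * lagDiag (-α) x.2 (-z) = if t = 0 then 1 else 0 := by
  set F : ℝ → ℝ := fun w => ∑ x ∈ antidiagonal t, lagDiag α x.1 w * lagDiag (-α) x.2 (-w)
  have hF : ∀ w, HasDerivAt F 0 w := fun w => by
    refine (HasDerivAt.fun_sum fun x _ => hasDerivAt_lagDiag_mul_lagDiag_neg α (-α) x.1 x.2 w)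
      |>.congr_deriv ?_
    rw [sum_sub_distrib, sub_eq_zero]
    cases t with
    | zero => simp [lagDiag_of_neg]
    | succ s =>
      rw [Nat.sum_antidiagonal_succ', Nat.sum_antidiagonal_succ]
      simp [lagDiag_of_neg]
  have hconst : F z = F 0 :=
    is_const_of_deriv_eq_zero (fun w => (hF w).differentiableAt) (fun w => (hF w).deriv) z 0
  have hF0 : F 0 = Ring.choose (α + -α) t := by
    rw [Ring.add_choose_eq t (Commute.all α (-α))]
    simp [F, lagDiag_natCast_apply_zero]
  change F z = _
  rw [hconst, hF0, add_neg_cancel]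
  split_ifs with ht
  · rw [ht, Ring.choose_zero_right]
  · exact Ring.choose_zero_pos ℝ (Nat.pos_of_ne_zero ht)

lemma sum_lagDiag_mul_lagDiag_neg (α z : ℝ) (T : ℤ) {S : Finset ℤ} (hS : Icc 0 T ⊆ S) :
    ∑ p ∈ S, lagDiag α p z * lagDiag (-α) (T - p) (-z) = if T = 0 then 1 else 0 := by
  rw [← sum_subset hS fun p _ hp => ?vanish]
  case vanish =>
    rw [mem_Icc, not_and_or, not_le, not_le] at hp
    rcases hp with hp | hp
    · simp [lagDiag_of_neg α hp]
    · simp [lagDiag_of_neg (-α) (show T - p < 0 by omega)]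
  obtain hT | ⟨t, rfl⟩ : T < 0 ∨ ∃ t : ℕ, T = t := by
    rcases lt_or_ge T 0 with h | h
    · exact .inl h
    · exact .inr ⟨T.toNat, by omega⟩
  · simp [hT.ne, Icc_eq_empty_of_lt hT]
  · simp only [Int.natCast_eq_zero]
    rw [← sum_antidiagonal_lagDiag_mul_lagDiag_neg α z t,
      Nat.sum_antidiagonal_eq_sum_range_succ_mk, Int.Icc_eq_finset_map, sum_map]
    refine sum_congr (by simp) fun k hk => ?_
    simp only [Function.Embedding.trans_apply, Nat.castEmbedding_apply, addLeftEmbedding_apply,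
      zero_add]
    rw [Nat.cast_sub (by simp at hk; omega)]

lemma neg_one_pow_succ_div_two {R : Type*} [Monoid R] [HasDistribNeg R] (k : ℕ) :
    (-1 : R) ^ ((k + 1) / 2) = (-1) ^ k * (-1) ^ (k / 2) := by
  obtain ⟨a, rfl | rfl⟩ := Nat.even_or_odd' k
  · rw [show (2 * a + 1) / 2 = a by omega, show 2 * a / 2 = a by omega, pow_mul]
    simp
  · rw [show (2 * a + 1 + 1) / 2 = a + 1 by omega, show (2 * a + 1) / 2 = a by omega, pow_succ,
      pow_succ, pow_mul]
    simp

namespace Matrix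

def hankel {R : Type*} (k : ℕ) (g : ℕ → R) : Matrix (Fin k) (Fin k) R :=
  of fun i j => g (i + j)

variable {R : Type*} [CommRing R]

lemma det_of_antitriangular {k : ℕ} (A : Matrix (Fin k) (Fin k) R)
    (hA : ∀ i j : Fin k, k ≤ (i : ℕ) + j → A i j = 0) :
    A.det = (-1) ^ (k / 2) * ∏ i, A i i.rev := by
  induction k with
  | zero => simp
  | succ k ih =>
    have hminor := ih (A.submatrix Fin.castSucc Fin.succ) fun i j hij => hA _ _ (by simp; omega)
    rw [det_succ_row A (Fin.last k), sum_eq_single 0 (fun j _ hj => ?vanish) (by simp),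
      Fin.prod_univ_castSucc, Fin.succAbove_last, Fin.succAbove_zero, hminor,
      neg_one_pow_succ_div_two]
    case vanish =>
      have : (j : ℕ) ≠ 0 := Fin.val_ne_iff.2 hj
      rw [hA (Fin.last k) j (by simp; omega)]
      ring
    simp [Fin.rev_castSucc]
    ring

lemma det_hankel_of_eq_zero (k : ℕ) (g : ℕ → R) (hg : ∀ t, k ≤ t → g t = 0) :
    (hankel k g).det = (-1) ^ (k / 2) * g (k - 1) ^ k := by
  rw [det_of_antitriangular (hankel k g) fun i j hij => hg _ hij]
  simp [hankel, Fin.val_rev, show ∀ i : Fin k, (i : ℕ) + (k - (i + 1)) = k - 1 by omega]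

lemma det_mul_det_toBlocks₂₂_of_mul_eq_one {m n : Type*} [Fintype m] [Fintype n] [DecidableEq m]
    [DecidableEq n] {A B : Matrix (m ⊕ n) (m ⊕ n) R} (h : A * B = 1) :
    A.det * B.toBlocks₂₂.det = A.toBlocks₁₁.det := by
  rw [← fromBlocks_toBlocks A, ← fromBlocks_toBlocks B, fromBlocks_multiply, ← fromBlocks_one] at h
  obtain ⟨-, h₁₂, -, h₂₂⟩ := fromBlocks_inj.mp h
  have hprod : A * fromBlocks 1 B.toBlocks₁₂ 0 B.toBlocks₂₂
      = fromBlocks A.toBlocks₁₁ 0 A.toBlocks₂₁ 1 := by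
    conv_lhs => rw [← fromBlocks_toBlocks A]
    rw [fromBlocks_multiply]
    simp [h₁₂, h₂₂]
  simpa [det_fromBlocks_zero₂₁, det_fromBlocks_zero₁₂] using congrArg det hprod

lemma det_hankel_mul_det_hankel_of_mul_eq_one {p q : ℕ} {g h : ℕ → R}
    (hgh : hankel (p + q) g * (hankel (p + q) h).submatrix Fin.rev Fin.rev = 1) :
    (hankel (p + q) g).det * (hankel q h).det = (hankel p g).det := by
  have key := det_mul_det_toBlocks₂₂_of_mul_eq_one
    (A := (hankel (p + q) g).submatrix finSumFinEquiv finSumFinEquiv)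
    (B := ((hankel (p + q) h).submatrix Fin.rev Fin.rev).submatrix finSumFinEquiv finSumFinEquiv)
    (by rw [submatrix_mul_equiv, hgh, submatrix_one_equiv])
  rw [det_submatrix_equiv_self] at key
  convert key using 2
  · rw [← det_submatrix_equiv_self Fin.revPerm]
    congr 1
    ext i j
    simp only [hankel, toBlocks₂₂, submatrix_apply, of_apply, Fin.revPerm_apply, Fin.val_rev,
      finSumFinEquiv_apply_right, Fin.val_natAdd]
    congr 1
    omega
  · ext i j
    simp [hankel, toBlocks₁₁]

end Matrix

open Matrix

lemma hankel_iteratedDeriv_lagDiag_mul_rev_eq_one (α z : ℝ) (N : ℕ) :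
    hankel (N + 1) (fun t => iteratedDeriv t (lagDiag α N) z) *
      (hankel (N + 1) fun t => iteratedDeriv t (lagDiag (-α) N) (-z)).submatrix Fin.rev Fin.rev
      = 1 := by
  ext i l
  have hterm : ∀ j : Fin (N + 1),
      hankel (N + 1) (fun t => iteratedDeriv t (lagDiag α N) z) i j *
        hankel (N + 1) (fun t => iteratedDeriv t (lagDiag (-α) N) (-z)) j.rev l.rev =
      (-1) ^ ((i : ℕ) + l) *
        (lagDiag α (N - i - j) z * lagDiag (-α) ((l - i : ℤ) - (N - i - j)) (-z)) := by
    intro j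
    have hj := j.isLt
    have hl := l.isLt
    simp only [hankel, Matrix.of_apply, iteratedDeriv_lagDiag, Fin.val_rev]
    have hsign : (-1 : ℝ) ^ ((i : ℕ) + j) * (-1) ^ (N + 1 - (j + 1) + (N + 1 - (l + 1)))
        = (-1) ^ ((i : ℕ) + l) := by
      rw [← pow_add, show (i : ℕ) + j + (N + 1 - (j + 1) + (N + 1 - (l + 1)))
        = (i + l) + 2 * (N - l) by omega, pow_add, pow_mul]
      norm_num
    rw [← hsign, show (N : ℤ) - ((i + j : ℕ) : ℤ) = N - i - j by push_cast; ring,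
      show (N : ℤ) - ((N + 1 - (j + 1) + (N + 1 - (l + 1)) : ℕ) : ℤ) = (l - i : ℤ) - (N - i - j)
        by omega]
    ring
  have hsupp : Icc 0 ((l : ℤ) - i) ⊆ univ.image fun j : Fin (N + 1) => (N : ℤ) - i - j := by
    intro p hp
    rw [mem_Icc] at hp
    exact mem_image.2 ⟨⟨(N - i - p).toNat, by omega⟩, mem_univ _, by simp; omega⟩
  rw [Matrix.mul_apply, Matrix.one_apply]
  simp only [Matrix.submatrix_apply, hterm, ← mul_sum]
  rw [← sum_image (g := fun j : Fin (N + 1) => (N : ℤ) - i - j)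
      (f := fun p => lagDiag α p z * lagDiag (-α) ((l - i : ℤ) - p) (-z))
      (by intro a _ b _ h; simp at h; omega),
    sum_lagDiag_mul_lagDiag_neg α z _ hsupp]
  by_cases hil : i = l
  · simp [hil]
  · simp [hil, sub_eq_zero, Fin.val_ne_iff.2 (Ne.symm hil)]

lemma det_hankel_iteratedDeriv_lagDiag (α z : ℝ) (N : ℕ) :
    (hankel (N + 1) fun t => iteratedDeriv t (lagDiag α N) z).det = (-1) ^ ((N + 1) / 2) := by
  rw [det_hankel_of_eq_zero _ _ fun t ht => ?vanish]
  case vanish => simp [iteratedDeriv_lagDiag, lagDiag_of_neg α (show (N : ℤ) - t < 0 by omega)]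
  simp [iteratedDeriv_lagDiag, lagDiag_zero, ← pow_mul, (Nat.even_mul_succ_self N).neg_one_pow]

lemma genLag_eq_det_hankel (m : ℤ) (n : ℕ) (μ z : ℝ) :
    genLag m n μ z = (hankel n fun t => iteratedDeriv t (lagL (m + n) (μ + 1)) z).det :=
  rfl

theorem genLag_discrete_symmetry_general (m n : ℕ) (μ : ℝ) (z : ℝ) :
    genLag (m : ℤ) n μ z
      = (-1 : ℝ) ^ ((m + n + 1) / 2) *
          genLag ((n : ℤ) - 1) (m + 1) (-μ - 2 * n - 2 * m - 2) (-z) := by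
  set N := n + m
  set α : ℝ := μ + N + 1
  have hL : lagL ((m : ℤ) + n) (μ + 1) = lagDiag α N := by
    rw [lagL_eq_lagDiag]
    congr 1 <;> simp only [N, α] <;> push_cast <;> ring
  have hR : lagL ((n : ℤ) - 1 + (m + 1 : ℕ)) (-μ - 2 * n - 2 * m - 2 + 1) = lagDiag (-α) N := by
    rw [lagL_eq_lagDiag]
    congr 1 <;> simp only [N, α] <;> push_cast <;> ring
  rw [genLag_eq_det_hankel, genLag_eq_det_hankel, hL, hR, add_comm m n,
    ← det_hankel_iteratedDeriv_lagDiag α z N]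
  exact (det_hankel_mul_det_hankel_of_mul_eq_one (p := n) (q := m + 1)
    (hankel_iteratedDeriv_lagDiag_mul_rev_eq_one α z N)).symm

/-- discrete symmetry of the generalised Laguerre polynomials. -/
theorem genLag_discrete_symmetry (m n : ℕ) (hn : 1 ≤ n) (μ : ℝ) (z : ℝ) :
    genLag (m : ℤ) n μ z
      = (-1 : ℝ) ^ ((m + n + 1) / 2) *
          genLag ((n : ℤ) - 1) (m + 1) (-μ - 2 * n - 2 * m - 2) (-z) :=
  genLag_discrete_symmetry_general m n μ z
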